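/- Let p be a prime with p ≠ 3 and let k be a field of characteristic p. In R = k[x_0, …, x_8] take f = x_0^3 + ⋯ + x_8^3 and let 𝔇 be the associated relations submodule. Then there exists c ∈ k with c ≠ 0 such that (x_0⋯x_8)^{2p} ≡ c · (x_0⋯x_8)^{2p mod 3} (mod 𝔇); here 2p mod 3 equals 2 if p ≡ 1 (mod 3) and 1 if p ≡ 2 (mod 3). (This is the pole-order reduction in the proof of Theorem 8.4: the target has pole order 6, respectively 3, which yields a′(X) = 2 for p ≡ 1 (mod 3) and a′(X) = 5 for p ≡ 2 (mod 3) for the 7-dimensional Fermat cubic X ⊂ P^8.) -/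

import Mathlib

open MvPolynomial

/-- The operator `D_i(g) = x_i·(∂g/∂x_i) + x_i·(∂f/∂x_i)·g` associated to `f`. -/
noncomputable def Dop {k : Type*} [Field k] {N : ℕ} (f : MvPolynomial (Fin N) k)
    (i : Fin N) (g : MvPolynomial (Fin N) k) : MvPolynomial (Fin N) k :=
  X i * pderiv i g + X i * pderiv i f * g

/-- The relations submodule `𝔇` associated to `f`: the `k`-linear span of
all the `D_i(g)` for `g` a polynomial and `i` an index. -/
noncomputable def relMod {k : Type*} [Field k] {N : ℕ} (f : MvPolynomial (Fin N) k) :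
    Submodule k (MvPolynomial (Fin N) k) :=
  Submodule.span k {h | ∃ i g, h = Dop f i g}

/-!
For `h` free of `x_i` and `f = ∑ x_j ^ d`, one has `D_i(x_i^m h) = m x_i^m h + d x_i^(m+d) h`, so
modulo `𝔇` the exponent of `x_i` can be lowered from `m + d` to `m` at the cost of the scalar
`-m/d`, which is a unit as long as `p ∤ m`. Lowering every exponent from `2p` to `2p mod 3` in
steps of `3` passes only through exponents `m < 2p` with `m ≡ 2p (mod 3)`; the only multiple of
`p` below `2p` is `p` itself, and `p ≢ 2p (mod 3)` because `p ≠ 3`.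
-/

def AssocMod {k M : Type*} [Field k] [AddCommGroup M] [Module k M] (D : Submodule k M)
    (a b : M) : Prop :=
  ∃ c : k, c ≠ 0 ∧ a - c • b ∈ D

namespace AssocMod

variable {k M : Type*} [Field k] [AddCommGroup M] [Module k M] {D : Submodule k M} {a b e : M}

theorem refl (D : Submodule k M) (a : M) : AssocMod D a a :=
  ⟨1, one_ne_zero, by simp⟩

theorem trans (hab : AssocMod D a b) (hbe : AssocMod D b e) : AssocMod D a e := by
  obtain ⟨c, hc, habD⟩ := hab
  obtain ⟨c', hc', hbeD⟩ := hbe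
  refine ⟨c * c', mul_ne_zero hc hc', ?_⟩
  have hsplit : a - (c * c') • e = (a - c • b) + c • (b - c' • e) := by
    rw [smul_sub, mul_smul]; abel
  exact hsplit ▸ D.add_mem habD (D.smul_mem c hbeD)

end AssocMod

section Fermat

variable {k : Type*} [Field k]

theorem X_mul_pderiv_X_pow {R σ : Type*} [CommSemiring R] (i : σ) (m : ℕ) :
    X i * pderiv i (X i ^ m : MvPolynomial σ R) = (m : MvPolynomial σ R) * X i ^ m := by
  cases m with
  | zero => simp
  | succ m => rw [pderiv_pow, pderiv_X_self, Nat.add_sub_cancel]; ring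

theorem X_mul_pderiv_sum_X_pow {R σ : Type*} [CommSemiring R] [Fintype σ] (i : σ) (d : ℕ) :
    X i * pderiv i (∑ j, X j ^ d : MvPolynomial σ R) = (d : MvPolynomial σ R) * X i ^ d := by
  rw [map_sum, Finset.sum_eq_single i, X_mul_pderiv_X_pow]
  · intro j _ hj
    rw [pderiv_pow, pderiv_X_of_ne hj, mul_zero]
  · simp

theorem pderiv_prod_X_pow_of_notMem {R σ : Type*} [CommSemiring R] {a : σ} {t : Finset σ}
    (ha : a ∉ t) (e : σ → ℕ) : pderiv a (∏ i ∈ t, X i ^ e i : MvPolynomial σ R) = 0 := by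
  classical
  induction t using Finset.induction with
  | empty => simp
  | insert b t hb ih =>
    rw [Finset.prod_insert hb, pderiv_mul, pderiv_pow,
      pderiv_X_of_ne (ne_of_mem_of_not_mem (Finset.mem_insert_self b t) ha),
      ih (fun h => ha (Finset.mem_insert_of_mem h))]
    ring

theorem Dop_sum_X_pow_X_pow_mul {N : ℕ} (d m : ℕ) {i : Fin N} {h : MvPolynomial (Fin N) k}
    (hh : pderiv i h = 0) :
    Dop (∑ j, X j ^ d) i (X i ^ m * h)
      = (d : k) • (X i ^ (m + d) * h) + (m : k) • (X i ^ m * h) := by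
  rw [Dop, pderiv_mul, hh, smul_eq_C_mul, smul_eq_C_mul, map_natCast, map_natCast]
  linear_combination
    h * X_mul_pderiv_X_pow (R := k) i m + X i ^ m * h * X_mul_pderiv_sum_X_pow (R := k) i d

theorem assocMod_X_pow_add_mul {N d m : ℕ} (hd : (d : k) ≠ 0) (hm : (m : k) ≠ 0) {i : Fin N}
    {h : MvPolynomial (Fin N) k} (hh : pderiv i h = 0) :
    AssocMod (relMod (∑ j, X j ^ d)) (X i ^ (m + d) * h) (X i ^ m * h) := by
  refine ⟨-(m / d : k), by simpa [hd] using hm, ?_⟩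
  have hrel : X i ^ (m + d) * h - (-(m / d : k)) • (X i ^ m * h)
      = (d : k)⁻¹ • Dop (∑ j, X j ^ d) i (X i ^ m * h) := by
    rw [Dop_sum_X_pow_X_pow_mul d m hh, smul_add, smul_smul, inv_mul_cancel₀ hd, one_smul,
      smul_smul, neg_smul, sub_neg_eq_add, div_eq_inv_mul]
  rw [hrel]
  exact Submodule.smul_mem _ _ (Submodule.subset_span ⟨i, _, rfl⟩)

theorem assocMod_X_pow_add_mul_mul {N d r : ℕ} (hd : (d : k) ≠ 0) {i : Fin N}
    {h : MvPolynomial (Fin N) k} (hh : pderiv i h = 0) {s : ℕ}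
    (hrs : ∀ j < s, ((r + d * j : ℕ) : k) ≠ 0) :
    AssocMod (relMod (∑ j, X j ^ d)) (X i ^ (r + d * s) * h) (X i ^ r * h) := by
  induction s with
  | zero => exact AssocMod.refl _ _
  | succ s ih =>
    rw [mul_add_one, ← add_assoc]
    exact (assocMod_X_pow_add_mul hd (hrs s s.lt_add_one) hh).trans
      (ih fun j hj => hrs j (hj.trans s.lt_add_one))

theorem assocMod_prod_X_pow_mul {N d r s : ℕ} (hd : (d : k) ≠ 0)
    (hrs : ∀ j < s, ((r + d * j : ℕ) : k) ≠ 0) (t : Finset (Fin N))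
    {g : MvPolynomial (Fin N) k} (hg : ∀ i ∈ t, pderiv i g = 0) :
    AssocMod (relMod (∑ j, X j ^ d))
      ((∏ i ∈ t, X i ^ (r + d * s)) * g) ((∏ i ∈ t, X i ^ r) * g) := by
  induction t using Finset.induction generalizing g with
  | empty => exact AssocMod.refl _ _
  | insert a t ha ih =>
    have hga : pderiv a ((∏ i ∈ t, X i ^ r) * g) = 0 := by
      rw [pderiv_mul, pderiv_prod_X_pow_of_notMem ha, hg a (Finset.mem_insert_self a t)]
      ring
    have hgt : ∀ i ∈ t, pderiv i (X a ^ (r + d * s) * g) = 0 := fun i hi => by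
      rw [pderiv_mul, pderiv_pow, pderiv_X_of_ne (ne_of_mem_of_not_mem hi ha).symm,
        hg i (Finset.mem_insert_of_mem hi)]
      ring
    rw [Finset.prod_insert ha, Finset.prod_insert ha, mul_assoc, mul_left_comm, mul_assoc]
    refine (ih hgt).trans ?_
    rw [mul_left_comm]
    exact assocMod_X_pow_add_mul_mul hd hga hrs

end Fermat

theorem natCast_ne_zero_of_lt_two_mul {k : Type*} [Field k] {p : ℕ} [CharP k p]
    (h3p : ¬ 3 ∣ p) {m : ℕ} (hm0 : m ≠ 0) (hm : m < 2 * p) (hmod : m % 3 = 2 * p % 3) :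
    (m : k) ≠ 0 := by
  rw [Ne, CharP.cast_eq_zero_iff k p]
  intro hpm
  have hmp : m = p := Nat.eq_of_dvd_of_lt_two_mul hm0 hpm hm
  omega

/-- Pole-order reduction in the proof of Theorem 8.4 for the 7-dimensional Fermat
cubic `x_0^3 + ⋯ + x_8^3 = 0` in `P^8`, `p ≠ 3`:
`(x_0⋯x_8)^{2p} ≡ c·(x_0⋯x_8)^{2p mod 3} (mod 𝔇)` with `c ≠ 0`; here `2p mod 3`
equals `2` if `p ≡ 1 (mod 3)` and `1` if `p ≡ 2 (mod 3)`. -/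
theorem stmt3 (p : ℕ) (hp : p.Prime) (hp3 : p ≠ 3)
    (k : Type*) [Field k] [CharP k p] :
    (p % 3 = 1 → 2 * p % 3 = 2) ∧ (p % 3 = 2 → 2 * p % 3 = 1) ∧
    ∃ c : k, c ≠ 0 ∧
      ((∏ i : Fin 9, X i ^ (2 * p)) - C c * ∏ i : Fin 9, X i ^ (2 * p % 3))
        ∈ relMod (∑ i : Fin 9, X i ^ 3 : MvPolynomial (Fin 9) k) := by
  refine ⟨by omega, by omega, ?_⟩
  have hp3' : ¬ 3 ∣ p := fun h3p =>
    hp3 ((Nat.prime_dvd_prime_iff_eq Nat.prime_three hp).mp h3p).symm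
  have h3 : ((3 : ℕ) : k) ≠ 0 := by
    rw [Ne, CharP.cast_eq_zero_iff k p]
    exact fun hdvd => hp3 ((Nat.prime_dvd_prime_iff_eq hp Nat.prime_three).mp hdvd)
  have hrs : ∀ j < 2 * p / 3, ((2 * p % 3 + 3 * j : ℕ) : k) ≠ 0 := fun j hj =>
    natCast_ne_zero_of_lt_two_mul hp3' (by omega) (by omega) (by omega)
  obtain ⟨c, hc, hmem⟩ := assocMod_prod_X_pow_mul h3 hrs Finset.univ (g := 1) (by simp)
  rw [Nat.mod_add_div, mul_one, mul_one, smul_eq_C_mul] at hmem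
  exact ⟨c, hc, hmem⟩
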